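/- (Lemma 1) Let M be a labeled MDP, let Paths_fin,φ ⊆ Paths_fin(s_init) be a set of finite paths of interest of M, let M' be the augmented MDP of M, and let Π' be the set of policies of M' that enforce a visit to state s_term (i.e., eventually take action a_term). Then max_{π ∈ Π} Pr(M^π ⊨ Paths_fin,φ) = max_{π' ∈ Π'} Pr(M'^{π'} ⊨ Paths_fin,φ). -/

import Mathlib

open scoped ENNReal

namespace LTLfMDP

/-- A labeled Markov decision process (data part): transition probabilities,
enabled actions, initial state and labeling function. -/
structure MDP (S A AP : Type) where
  P : S → A → S → ℝ≥0∞
  enabled : S → Set A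
  init : S
  label : S → Set AP

/-- A finite path from the initial state: the list of action/successor-state
steps taken (the implicit first state is `init`). -/
abbrev FinPath (S A : Type) := List (A × S)

/-- An infinite path from the initial state: at time `i` the action taken and
the successor state reached (the implicit first state is `init`). -/
abbrev InfPath (S A : Type) := ℕ → A × S

/-- A policy maps every finite path to an action. -/
abbrev Policy (S A : Type) := FinPath S A → A

variable {S A AP : Type}

/-- Well-formedness of a labeled MDP: every state has an enabled action and
the transition probabilities of enabled actions sum to one. -/
def MDP.IsWF [Fintype S] (M : MDP S A AP) : Prop :=
  (∀ s : S, (M.enabled s).Nonempty) ∧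
    ∀ (s : S) (a : A), a ∈ M.enabled s → (∑ s' : S, M.P s a s') = 1

/-- The last state of a finite path (`init` for the empty path). -/
def MDP.lastState (M : MDP S A AP) (l : FinPath S A) : S :=
  (l.map Prod.snd).getLastD M.init

/-- The `i`-th state `s_i` along a finite path (`s_0 = init`). -/
def MDP.stateAtF (M : MDP S A AP) (l : FinPath S A) (i : ℕ) : S :=
  M.lastState (l.take i)

/-- A finite path of the MDP: every action is enabled and every transition has
positive probability. -/
def MDP.ValidFin (M : MDP S A AP) (l : FinPath S A) : Prop :=
  ∀ i (h : i < l.length),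
    (l.get ⟨i, h⟩).1 ∈ M.enabled (M.stateAtF l i) ∧
      0 < M.P (M.stateAtF l i) (l.get ⟨i, h⟩).1 (l.get ⟨i, h⟩).2

/-- The `i`-th state `s_i` along an infinite path (`s_0 = init`). -/
def MDP.stateAtI (M : MDP S A AP) (w : InfPath S A) : ℕ → S
  | 0 => M.init
  | i + 1 => (w i).2

/-- An infinite path of the MDP: every action is enabled and every transition
has positive probability. -/
def MDP.ValidInf (M : MDP S A AP) (w : InfPath S A) : Prop :=
  ∀ i : ℕ,
    (w i).1 ∈ M.enabled (M.stateAtI w i) ∧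
      0 < M.P (M.stateAtI w i) (w i).1 (M.stateAtI w (i + 1))

/-- A policy of the MDP chooses an enabled action after every finite path. -/
def MDP.IsPolicy (M : MDP S A AP) (π : Policy S A) : Prop :=
  ∀ l : FinPath S A, π l ∈ M.enabled (M.lastState l)

/-- The finite prefix of length `n` of an infinite path. -/
def takeI (w : InfPath S A) (n : ℕ) : FinPath S A :=
  (List.range n).map w

/-- A finite path is `π`-consistent if each of its actions is the one `π`
assigns to the corresponding proper prefix. -/
def ConsistentFin (π : Policy S A) (l : FinPath S A) : Prop :=
  ∀ i (h : i < l.length), (l.get ⟨i, h⟩).1 = π (l.take i)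

/-- `Paths^π(s_init)`: the set of `π`-consistent infinite paths of the MDP. -/
def MDP.PathsSet (M : MDP S A AP) (π : Policy S A) : Set (InfPath S A) :=
  { w | M.ValidInf w ∧ ∀ i : ℕ, (w i).1 = π (takeI w i) }

/-- The cylinder set of a finite path: all `π`-consistent infinite paths of the
MDP extending it. -/
def MDP.Cyl (M : MDP S A AP) (π : Policy S A) (l : FinPath S A) :
    Set (InfPath S A) :=
  { w | w ∈ M.PathsSet π ∧ takeI w l.length = l }

/-- The σ-algebra generated by the cylinder sets of (valid, `π`-consistent)
finite paths. -/
def MDP.cylSigma (M : MDP S A AP) (π : Policy S A) :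
    MeasurableSpace (InfPath S A) :=
  MeasurableSpace.generateFrom
    { C | ∃ l : FinPath S A, M.ValidFin l ∧ ConsistentFin π l ∧ C = M.Cyl π l }

/-- The product of the transition probabilities along a finite path starting
in a given state. -/
noncomputable def MDP.weightFrom (M : MDP S A AP) : S → List (A × S) → ℝ≥0∞
  | _, [] => 1
  | s, (a, s') :: rest => M.P s a s' * M.weightFrom s' rest

/-- `∏_{0 ≤ i < n} P(s_i, a_i, s_{i+1})` for a finite path from `init`. -/
noncomputable def MDP.pathWeight (M : MDP S A AP) (l : FinPath S A) : ℝ≥0∞ :=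
  M.weightFrom M.init l

/-- `μ` is the probability measure `Pr^π` induced by the policy `π`: it assigns
to the cylinder set of every valid `π`-consistent finite path the product of
the transition probabilities along that path. -/
def IsCylMeasure (M : MDP S A AP) (π : Policy S A)
    (μ : @MeasureTheory.Measure (InfPath S A) (M.cylSigma π)) : Prop :=
  ∀ l : FinPath S A, M.ValidFin l → ConsistentFin π l →
    μ (M.Cyl π l) = M.pathWeight l

/-- `{w ∈ Paths^π(s_init) : pre(w) ∩ Paths_fin,φ ≠ ∅}`: the `π`-consistent
infinite paths having some finite prefix in the given set of finite paths. -/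
def MDP.SatFinSet (M : MDP S A AP) (π : Policy S A)
    (Pfin : Set (FinPath S A)) : Set (InfPath S A) :=
  { w | w ∈ M.PathsSet π ∧ ∃ l ∈ Pfin, takeI w l.length = l }

/-- The augmented MDP `M'`: state `none` is `s_term`, action `none` is
`a_term`, and atomic proposition `none` is `alive`. -/
noncomputable def MDP.augment (M : MDP S A AP) : MDP (Option S) (Option A) (Option AP) where
  P s a s' :=
    match s, a, s' with
    | some s0, some a0, some s1 => M.P s0 a0 s1
    | _, none, none => 1
    | _, _, _ => 0
  enabled s :=
    match s with
    | some s0 => insert none (Option.some '' M.enabled s0)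
    | none => {none}
  init := some M.init
  label s :=
    match s with
    | some s0 => insert none (Option.some '' M.label s0)
    | none => ∅

/-- A finite path of `M` viewed as a finite path of the augmented MDP `M'`. -/
def liftFin (l : FinPath S A) : FinPath (Option S) (Option A) :=
  l.map fun p => (some p.1, some p.2)

/-- Membership in `Π'`: under `π'` every `π'`-consistent path of the augmented
MDP eventually takes the action `a_term` (= `none`). -/
def MDP.Terminating (M' : MDP (Option S) (Option A) (Option AP))
    (π' : Policy (Option S) (Option A)) : Prop :=
  ∀ w ∈ M'.PathsSet π', ∃ i : ℕ, (w i).1 = (none : Option A)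

/-!
The probability that a policy meets `Paths_fin,φ` is the total weight of the valid consistent
paths of `Paths_fin,φ` that are minimal for the prefix order, because their cylinders partition
the event. Lifting a path of `M` to `M'` preserves its weight and validity, and preserves
consistency and minimality as long as the policies of `M` and `M'` agree along it. Hence any
finite part of the sum for a policy `π` of `M` is reached by the terminating policy of `M'` that
follows `π` up to a length bound and then takes `a_term`. Conversely, a policy `π'` of `M'` can
only reach `Paths_fin,φ` along lifts of paths of `M`, where a policy of `M` copying `π'` collects
the same weight.
-/

open MeasureTheory

section Prefixes

@[simp]
lemma takeI_length (w : InfPath S A) (n : ℕ) : (takeI w n).length = n := by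
  simp [takeI]

lemma take_takeI_of_le (w : InfPath S A) {m n : ℕ} (h : m ≤ n) :
    (takeI w n).take m = takeI w m := by
  rw [takeI, ← List.map_take, List.take_range, min_eq_left h, takeI]

lemma get_takeI (w : InfPath S A) (n i : ℕ) (h : i < (takeI w n).length) :
    (takeI w n).get ⟨i, h⟩ = w i := by
  simp [takeI]

lemma lastState_takeI (M : MDP S A AP) (w : InfPath S A) (i : ℕ) :
    M.lastState (takeI w i) = M.stateAtI w i := by
  cases i with
  | zero => rfl
  | succ j => simp [MDP.lastState, takeI, List.range_succ, MDP.stateAtI]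

lemma stateAtF_takeI (M : MDP S A AP) (w : InfPath S A) {i n : ℕ} (h : i ≤ n) :
    M.stateAtF (takeI w n) i = M.stateAtI w i := by
  rw [MDP.stateAtF, take_takeI_of_le w h, lastState_takeI]

lemma validFin_takeI {M : MDP S A AP} {w : InfPath S A} (hw : M.ValidInf w) (n : ℕ) :
    M.ValidFin (takeI w n) := by
  intro i h
  have hi : i < n := by simpa using h
  rw [get_takeI, stateAtF_takeI M w hi.le]
  exact hw i

lemma consistentFin_takeI {π : Policy S A} {w : InfPath S A}
    (hw : ∀ i : ℕ, (w i).1 = π (takeI w i)) (n : ℕ) :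
    ConsistentFin π (takeI w n) := by
  intro i h
  have hi : i < n := by simpa using h
  rw [get_takeI, take_takeI_of_le w hi.le]
  exact hw i

lemma takeI_eq_of_prefix {w : InfPath S A} {l : FinPath S A} {n : ℕ} (h : l <+: takeI w n) :
    takeI w l.length = l := by
  rw [← take_takeI_of_le w (by simpa using h.length_le)]
  exact (List.prefix_iff_eq_take.mp h).symm

lemma prefix_of_takeI_eq {w : InfPath S A} {l₁ l₂ : FinPath S A}
    (hlen : l₁.length ≤ l₂.length) (h₁ : takeI w l₁.length = l₁)
    (h₂ : takeI w l₂.length = l₂) : l₁ <+: l₂ := by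
  rw [List.prefix_iff_eq_take, ← h₂, take_takeI_of_le w hlen, h₁]

end Prefixes

section MinimalPaths

def MDP.minimalPaths (M : MDP S A AP) (π : Policy S A) (Pfin : Set (FinPath S A)) :
    Set (FinPath S A) :=
  {l | l ∈ Pfin ∧ M.ValidFin l ∧ ConsistentFin π l ∧ ∀ l' ∈ Pfin, l' <+: l → l' = l}

lemma satFinSet_eq_biUnion_cyl (M : MDP S A AP) (π : Policy S A) (Pfin : Set (FinPath S A)) :
    M.SatFinSet π Pfin = ⋃ l ∈ M.minimalPaths π Pfin, M.Cyl π l := by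
  classical
  ext w
  simp only [Set.mem_iUnion, exists_prop]
  constructor
  · rintro ⟨hw, l, hl, hwl⟩
    have hex : ∃ n, takeI w n ∈ Pfin := ⟨l.length, by rwa [hwl]⟩
    refine ⟨takeI w (Nat.find hex), ⟨Nat.find_spec hex, validFin_takeI hw.1 _,
      consistentFin_takeI hw.2 _, fun l' hl' hpre => ?_⟩, hw, by simp⟩
    have hfirst : Nat.find hex ≤ l'.length := Nat.find_min' hex (by rwa [takeI_eq_of_prefix hpre])
    exact hpre.eq_of_length (le_antisymm (by simpa using hpre.length_le) (by simpa using hfirst))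
  · rintro ⟨l, hl, hw, hwl⟩
    exact ⟨hw, l, hl.1, hwl⟩

lemma pairwiseDisjoint_cyl_minimalPaths (M : MDP S A AP) (π : Policy S A)
    (Pfin : Set (FinPath S A)) :
    (M.minimalPaths π Pfin).PairwiseDisjoint (M.Cyl π) := by
  intro l hl l' hl' hne
  refine Set.disjoint_left.mpr fun w hwl hwl' => hne ?_
  rcases le_total l.length l'.length with h | h
  · exact hl'.2.2.2 l hl.1 (prefix_of_takeI_eq h hwl.2 hwl'.2)
  · exact (hl.2.2.2 l' hl'.1 (prefix_of_takeI_eq h hwl'.2 hwl.2)).symm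

lemma measurableSet_cyl {M : MDP S A AP} {π : Policy S A} {l : FinPath S A}
    (hv : M.ValidFin l) (hc : ConsistentFin π l) :
    MeasurableSet[M.cylSigma π] (M.Cyl π l) :=
  MeasurableSpace.measurableSet_generateFrom ⟨l, hv, hc, rfl⟩

lemma measure_satFinSet [Countable S] [Countable A] {M : MDP S A AP} {π : Policy S A}
    {μ : @Measure (InfPath S A) (M.cylSigma π)} (hμ : IsCylMeasure M π μ)
    (Pfin : Set (FinPath S A)) :
    μ (M.SatFinSet π Pfin) = ∑' l, (M.minimalPaths π Pfin).indicator M.pathWeight l := by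
  let _ := M.cylSigma π
  rw [satFinSet_eq_biUnion_cyl, measure_biUnion (Set.to_countable _)
      (pairwiseDisjoint_cyl_minimalPaths M π Pfin) fun _ hl => measurableSet_cyl hl.2.1 hl.2.2.1,
    ← tsum_subtype]
  exact tsum_congr fun l => hμ l l.2.2.1 l.2.2.2.1

end MinimalPaths

section Lifting

lemma liftFin_length (l : FinPath S A) : (liftFin l).length = l.length := by
  simp [liftFin]

lemma liftFin_injective : Function.Injective (liftFin (S := S) (A := A)) :=
  List.map_injective_iff.mpr fun p q h => by simpa [Prod.ext_iff] using h

lemma liftFin_take (l : FinPath S A) (i : ℕ) :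
    (liftFin l).take i = liftFin (l.take i) :=
  List.map_take.symm

lemma liftFin_prefix_iff {l₁ l₂ : FinPath S A} :
    liftFin l₁ <+: liftFin l₂ ↔ l₁ <+: l₂ := by
  rw [List.prefix_iff_eq_take, List.prefix_iff_eq_take, liftFin_length, liftFin_take,
    liftFin_injective.eq_iff]

lemma get_liftFin (l : FinPath S A) (i : ℕ) (h : i < (liftFin l).length)
    (h' : i < l.length) :
    (liftFin l).get ⟨i, h⟩ = (some (l.get ⟨i, h'⟩).1, some (l.get ⟨i, h'⟩).2) := by
  simp [liftFin]

lemma lastState_liftFin (M : MDP S A AP) (l : FinPath S A) :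
    M.augment.lastState (liftFin l) = some (M.lastState l) := by
  simp only [MDP.lastState, liftFin, List.map_map, List.getLastD_eq_getLast?, List.getLast?_map]
  cases l.getLast? <;> rfl

lemma stateAtF_liftFin (M : MDP S A AP) (l : FinPath S A) (i : ℕ) :
    M.augment.stateAtF (liftFin l) i = some (M.stateAtF l i) := by
  rw [MDP.stateAtF, MDP.stateAtF, liftFin_take, lastState_liftFin]

lemma weightFrom_liftFin (M : MDP S A AP) (s : S) (l : FinPath S A) :
    M.augment.weightFrom (some s) (liftFin l) = M.weightFrom s l := by
  induction l generalizing s with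
  | nil => rfl
  | cons p l ih => exact congrArg (M.P s p.1 p.2 * ·) (ih p.2)

lemma pathWeight_liftFin (M : MDP S A AP) (l : FinPath S A) :
    M.augment.pathWeight (liftFin l) = M.pathWeight l :=
  weightFrom_liftFin M M.init l

lemma some_mem_augment_enabled {M : MDP S A AP} {s : S} {a : A} :
    some a ∈ M.augment.enabled (some s) ↔ a ∈ M.enabled s := by
  simp [MDP.augment]

lemma none_mem_augment_enabled (M : MDP S A AP) (s : Option S) :
    none ∈ M.augment.enabled s := by
  cases s <;> simp [MDP.augment]

lemma validFin_liftFin_iff {M : MDP S A AP} {l : FinPath S A} :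
    M.augment.ValidFin (liftFin l) ↔ M.ValidFin l := by
  simp only [MDP.ValidFin, liftFin_length]
  refine forall₂_congr fun i h => ?_
  rw [get_liftFin l i (by rwa [liftFin_length]) h, stateAtF_liftFin, some_mem_augment_enabled]
  rfl

lemma consistentFin_liftFin_iff {π' : Policy (Option S) (Option A)} {l : FinPath S A} :
    ConsistentFin π' (liftFin l) ↔
      ∀ i (h : i < l.length), π' (liftFin (l.take i)) = some (l.get ⟨i, h⟩).1 := by
  simp only [ConsistentFin, liftFin_length]
  refine forall₂_congr fun i h => ?_
  rw [get_liftFin l i (by rwa [liftFin_length]) h, liftFin_take, eq_comm]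

lemma liftFin_mem_minimalPaths_iff {M : MDP S A AP} {π : Policy S A}
    {π' : Policy (Option S) (Option A)} {Pfin : Set (FinPath S A)} {l : FinPath S A}
    (hagree : ∀ i < l.length, π' (liftFin (l.take i)) = some (π (l.take i))) :
    liftFin l ∈ M.augment.minimalPaths π' (liftFin '' Pfin) ↔
      l ∈ M.minimalPaths π Pfin := by
  have hcons : ConsistentFin π' (liftFin l) ↔ ConsistentFin π l := by
    rw [consistentFin_liftFin_iff]
    refine forall₂_congr fun i h => ?_
    rw [hagree i h, Option.some_inj, eq_comm]
  simp only [MDP.minimalPaths, Set.mem_ofPred_eq, liftFin_injective.mem_set_image,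
    validFin_liftFin_iff, hcons, Set.forall_mem_image, liftFin_prefix_iff,
    liftFin_injective.eq_iff]

lemma indicator_minimalPaths_liftFin {M : MDP S A AP} {π : Policy S A}
    {π' : Policy (Option S) (Option A)} {Pfin : Set (FinPath S A)} {l : FinPath S A}
    (hagree : ∀ i < l.length, π' (liftFin (l.take i)) = some (π (l.take i))) :
    (M.augment.minimalPaths π' (liftFin '' Pfin)).indicator M.augment.pathWeight (liftFin l) =
      (M.minimalPaths π Pfin).indicator M.pathWeight l := by
  by_cases hl : l ∈ M.minimalPaths π Pfin
  · rw [Set.indicator_of_mem hl,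
      Set.indicator_of_mem ((liftFin_mem_minimalPaths_iff hagree).mpr hl), pathWeight_liftFin]
  · rw [Set.indicator_of_notMem hl,
      Set.indicator_of_notMem (mt (liftFin_mem_minimalPaths_iff hagree).mp hl)]

end Lifting

section Policies

variable {M : MDP S A AP} {Pfin : Set (FinPath S A)}

open Classical in
noncomputable def truncatePolicy (π : Policy S A) (n : ℕ) : Policy (Option S) (Option A) :=
  fun h => if hh : ∃ l : FinPath S A, l.length ≤ n ∧ liftFin l = h then some (π hh.choose)
    else none

lemma truncatePolicy_liftFin (π : Policy S A) {n : ℕ} {l : FinPath S A} (hl : l.length ≤ n) :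
    truncatePolicy π n (liftFin l) = some (π l) := by
  have hh : ∃ l' : FinPath S A, l'.length ≤ n ∧ liftFin l' = liftFin l := ⟨l, hl, rfl⟩
  rw [truncatePolicy, dif_pos hh, liftFin_injective hh.choose_spec.2]

lemma isPolicy_truncatePolicy {π : Policy S A} (hπ : M.IsPolicy π) (n : ℕ) :
    M.augment.IsPolicy (truncatePolicy π n) := by
  intro h
  by_cases hh : ∃ l : FinPath S A, l.length ≤ n ∧ liftFin l = h
  · obtain ⟨l, hl, rfl⟩ := hh
    rw [truncatePolicy_liftFin π hl, lastState_liftFin]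
    exact some_mem_augment_enabled.mpr (hπ l)
  · rw [truncatePolicy, dif_neg hh]
    exact none_mem_augment_enabled M _

lemma terminating_truncatePolicy (π : Policy S A) (n : ℕ) :
    M.augment.Terminating (truncatePolicy π n) := by
  refine fun w hw => ⟨n + 1, ?_⟩
  rw [hw.2, truncatePolicy, dif_neg]
  rintro ⟨l, hl, hlw⟩
  have hlen := congrArg List.length hlw
  simp only [liftFin_length, takeI_length] at hlen
  omega

lemma sum_le_measure_satFinSet_truncatePolicy [Countable S] [Countable A] {π : Policy S A}
    {n : ℕ} {F : Finset (FinPath S A)} (hF : ∀ l ∈ F, l.length ≤ n)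
    {μ' : @Measure (InfPath (Option S) (Option A)) (M.augment.cylSigma (truncatePolicy π n))}
    (hμ' : IsCylMeasure M.augment (truncatePolicy π n) μ') :
    ∑ l ∈ F, (M.minimalPaths π Pfin).indicator M.pathWeight l ≤
      μ' (M.augment.SatFinSet (truncatePolicy π n) (liftFin '' Pfin)) := by
  rw [measure_satFinSet hμ']
  calc ∑ l ∈ F, (M.minimalPaths π Pfin).indicator M.pathWeight l
      = ∑ l ∈ F, (M.augment.minimalPaths (truncatePolicy π n) (liftFin '' Pfin)).indicator
          M.augment.pathWeight (liftFin l) := by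
        refine Finset.sum_congr rfl fun l hl => ?_
        refine (indicator_minimalPaths_liftFin fun i _ => ?_).symm
        exact truncatePolicy_liftFin π ((List.length_take_le' i l).trans (hF l hl))
    _ ≤ ∑' l, (M.augment.minimalPaths (truncatePolicy π n) (liftFin '' Pfin)).indicator
          M.augment.pathWeight (liftFin l) := ENNReal.sum_le_tsum F
    _ ≤ _ := ENNReal.tsum_comp_le_tsum_of_injective liftFin_injective _

def projectPolicy (π' : Policy (Option S) (Option A)) (σ : Policy S A) : Policy S A :=
  fun l => (π' (liftFin l)).getD (σ l)

lemma isPolicy_projectPolicy {π' : Policy (Option S) (Option A)} {σ : Policy S A}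
    (hπ' : M.augment.IsPolicy π') (hσ : M.IsPolicy σ) : M.IsPolicy (projectPolicy π' σ) := by
  intro l
  have h := hπ' (liftFin l)
  rw [lastState_liftFin] at h
  unfold projectPolicy
  cases hl : π' (liftFin l) with
  | none => exact hσ l
  | some a => exact some_mem_augment_enabled.mp (hl ▸ h)

lemma measure_satFinSet_augment_le_projectPolicy [Countable S] [Countable A]
    {π' : Policy (Option S) (Option A)} {σ : Policy S A}
    {μ' : @Measure (InfPath (Option S) (Option A)) (M.augment.cylSigma π')}
    (hμ' : IsCylMeasure M.augment π' μ')
    {μ : @Measure (InfPath S A) (M.cylSigma (projectPolicy π' σ))}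
    (hμ : IsCylMeasure M (projectPolicy π' σ) μ) :
    μ' (M.augment.SatFinSet π' (liftFin '' Pfin)) ≤
      μ (M.SatFinSet (projectPolicy π' σ) Pfin) := by
  set W := (M.augment.minimalPaths π' (liftFin '' Pfin)).indicator M.augment.pathWeight
  have hsupp : Function.support W ⊆ Set.range liftFin := by
    intro h hh
    obtain ⟨⟨l, -, rfl⟩, -⟩ := Set.mem_of_indicator_ne_zero hh
    exact ⟨l, rfl⟩
  have hle : ∀ l, W (liftFin l) ≤ (M.minimalPaths (projectPolicy π' σ) Pfin).indicator
      M.pathWeight l := by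
    intro l
    by_cases hl : liftFin l ∈ M.augment.minimalPaths π' (liftFin '' Pfin)
    · refine (indicator_minimalPaths_liftFin fun i hi => ?_).le
      have hact := consistentFin_liftFin_iff.mp hl.2.2.1 i hi
      simp [projectPolicy, hact]
    · simp [W, Set.indicator_of_notMem hl]
  rw [measure_satFinSet hμ', measure_satFinSet hμ, ← liftFin_injective.tsum_eq hsupp]
  exact ENNReal.tsum_le_tsum hle

end Policies

theorem augment_max_prob_eq_general
    {S A AP : Type} [Fintype S] [Fintype A]
    (M : MDP S A AP) (hM : M.IsWF)
    (Pfin : Set (FinPath S A))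
    (μf : ∀ π : Policy S A,
      @MeasureTheory.Measure (InfPath S A) (M.cylSigma π))
    (hμf : ∀ π : Policy S A, M.IsPolicy π → IsCylMeasure M π (μf π))
    (μf' : ∀ π' : Policy (Option S) (Option A),
      @MeasureTheory.Measure (InfPath (Option S) (Option A))
        ((M.augment).cylSigma π'))
    (hμf' : ∀ π' : Policy (Option S) (Option A),
      (M.augment).IsPolicy π' → IsCylMeasure (M.augment) π' (μf' π')) :
    (⨆ (π : Policy S A) (_ : M.IsPolicy π), μf π (M.SatFinSet π Pfin)) =
      ⨆ (π' : Policy (Option S) (Option A))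
        (_ : (M.augment).IsPolicy π' ∧ (M.augment).Terminating π'),
        μf' π' ((M.augment).SatFinSet π' (liftFin '' Pfin)) := by
  apply le_antisymm
  · refine iSup₂_le fun π hπ => ?_
    rw [measure_satFinSet (hμf π hπ), ENNReal.tsum_eq_iSup_sum]
    refine iSup_le fun F => ?_
    have hπ' := isPolicy_truncatePolicy hπ (F.sup List.length)
    calc _ ≤ _ := sum_le_measure_satFinSet_truncatePolicy (fun _ => Finset.le_sup) (hμf' _ hπ')
      _ ≤ _ := le_iSup₂_of_le _ ⟨hπ', terminating_truncatePolicy π _⟩ le_rfl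
  · refine iSup₂_le fun π' ⟨hπ', _⟩ => ?_
    obtain ⟨σ, hσ⟩ : ∃ σ : Policy S A, M.IsPolicy σ :=
      ⟨fun l => (hM.1 _).some, fun l => (hM.1 _).some_mem⟩
    have hπ := isPolicy_projectPolicy hπ' hσ
    calc _ ≤ _ := measure_satFinSet_augment_le_projectPolicy (hμf' π' hπ') (hμf _ hπ)
      _ ≤ _ := le_iSup₂_of_le _ hπ le_rfl

/-- Lemma 1: `max_{π ∈ Π} Pr(M^π ⊨ Paths_fin,φ) =
max_{π' ∈ Π'} Pr(M'^{π'} ⊨ Paths_fin,φ)`, where `Π'` is the set of policies of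
the augmented MDP `M'` that enforce a visit to `s_term` (eventually take
`a_term`). -/
theorem augment_max_prob_eq
    {S A AP : Type} [Fintype S] [Fintype A] [Fintype AP]
    (M : MDP S A AP) (hM : M.IsWF)
    (Pfin : Set (FinPath S A)) (hPfin : ∀ l ∈ Pfin, M.ValidFin l)
    (μf : ∀ π : Policy S A,
      @MeasureTheory.Measure (InfPath S A) (M.cylSigma π))
    (hμf : ∀ π : Policy S A, M.IsPolicy π → IsCylMeasure M π (μf π))
    (μf' : ∀ π' : Policy (Option S) (Option A),
      @MeasureTheory.Measure (InfPath (Option S) (Option A))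
        ((M.augment).cylSigma π'))
    (hμf' : ∀ π' : Policy (Option S) (Option A),
      (M.augment).IsPolicy π' → IsCylMeasure (M.augment) π' (μf' π')) :
    (⨆ (π : Policy S A) (_ : M.IsPolicy π), μf π (M.SatFinSet π Pfin)) =
      ⨆ (π' : Policy (Option S) (Option A))
        (_ : (M.augment).IsPolicy π' ∧ (M.augment).Terminating π'),
        μf' π' ((M.augment).SatFinSet π' (liftFin '' Pfin)) :=
  augment_max_prob_eq_general M hM Pfin μf hμf μf' hμf'

end LTLfMDP
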